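/- The map Φ(p,q) = ((1-ρ)p + ρ(𝟏 - q - M_p q), M_p q) is well-defined as a map from (Σ \ V) × Σ to itself, for any fixed ρ ∈ (0,1): if p ∈ Σ is not a vertex and q ∈ Σ, then M_p q ∈ Σ, 𝟏 - q - M_p q ∈ Σ, and (1-ρ)p + ρ(𝟏 - q - M_p q) ∈ Σ and is not a vertex. -/

import Mathlib

open Matrix

noncomputable def Mp (p : Fin 3 → ℝ) : Matrix (Fin 3) (Fin 3) ℝ :=
  !![0, p 2 / (p 0 + p 2), p 1 / (p 0 + p 1);
     p 2 / (p 1 + p 2), 0, p 0 / (p 0 + p 1);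
     p 1 / (p 1 + p 2), p 0 / (p 0 + p 2), 0]

/-- Membership in the unit simplex of ℝ³. -/
def inSimplex (v : Fin 3 → ℝ) : Prop := (∀ i, 0 ≤ v i) ∧ v 0 + v 1 + v 2 = 1

set_option maxHeartbeats 1000000 in
/-- The map `Φ(p,q) = ((1-ρ)p + ρ(𝟏 - q - M_p q), M_p q)` is well defined from
`(Σ \ V) × Σ` to itself: for `p ∈ Σ` not a vertex and `q ∈ Σ`, one has `M_p q ∈ Σ`,
`𝟏 - q - M_p q ∈ Σ`, and `(1-ρ)p + ρ(𝟏 - q - M_p q) ∈ Σ` and is not a vertex. -/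
theorem stmt8 (ρ : ℝ) (hρ : ρ ∈ Set.Ioo (0 : ℝ) 1)
    (p q : Fin 3 → ℝ) (hp : inSimplex p) (hpV : ∀ i, p i ≠ 1)
    (hq : inSimplex q) :
    inSimplex ((Mp p).mulVec q) ∧
    inSimplex (fun i => 1 - q i - ((Mp p).mulVec q) i) ∧
    inSimplex (fun i => (1 - ρ) * p i + ρ * (1 - q i - ((Mp p).mulVec q) i)) ∧
    (∀ i, (1 - ρ) * p i + ρ * (1 - q i - ((Mp p).mulVec q) i) ≠ 1) := by
  obtain ⟨hρ0, hρ1⟩ := hρ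
  obtain ⟨hpn, hps⟩ := hp
  obtain ⟨hqn, hqs⟩ := hq
  have h01 : 0 < p 0 + p 1 := by
    rcases (add_nonneg (hpn 0) (hpn 1)).lt_or_eq with h | h
    · exact h
    · exact absurd (by linarith) (hpV 2)
  have h02 : 0 < p 0 + p 2 := by
    rcases (add_nonneg (hpn 0) (hpn 2)).lt_or_eq with h | h
    · exact h
    · exact absurd (by linarith) (hpV 1)
  have h12 : 0 < p 1 + p 2 := by
    rcases (add_nonneg (hpn 1) (hpn 2)).lt_or_eq with h | h
    · exact h
    · exact absurd (by linarith) (hpV 0)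
  have e0 : (Mp p).mulVec q 0 = p 2 / (p 0 + p 2) * q 1 + p 1 / (p 0 + p 1) * q 2 := by
    simp [Mp, Matrix.mulVec, dotProduct, Fin.sum_univ_three]
  have e1 : (Mp p).mulVec q 1 = p 2 / (p 1 + p 2) * q 0 + p 0 / (p 0 + p 1) * q 2 := by
    simp [Mp, Matrix.mulVec, dotProduct, Fin.sum_univ_three]
  have e2 : (Mp p).mulVec q 2 = p 1 / (p 1 + p 2) * q 0 + p 0 / (p 0 + p 2) * q 1 := by
    simp [Mp, Matrix.mulVec, dotProduct, Fin.sum_univ_three]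
  -- column sums
  have c12 : p 2 / (p 1 + p 2) + p 1 / (p 1 + p 2) = 1 := by
    rw [← add_div, add_comm]; exact div_self h12.ne'
  have c02 : p 2 / (p 0 + p 2) + p 0 / (p 0 + p 2) = 1 := by
    rw [← add_div, add_comm]; exact div_self h02.ne'
  have c01 : p 1 / (p 0 + p 1) + p 0 / (p 0 + p 1) = 1 := by
    rw [← add_div, add_comm]; exact div_self h01.ne'
  -- nonnegativity and boundedness of the ratios
  have r1 : 0 ≤ p 2 / (p 0 + p 2) ∧ p 2 / (p 0 + p 2) ≤ 1 :=
    ⟨div_nonneg (hpn 2) h02.le, (div_le_one h02).mpr (by linarith [hpn 0])⟩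
  have r2 : 0 ≤ p 1 / (p 0 + p 1) ∧ p 1 / (p 0 + p 1) ≤ 1 :=
    ⟨div_nonneg (hpn 1) h01.le, (div_le_one h01).mpr (by linarith [hpn 0])⟩
  have r3 : 0 ≤ p 2 / (p 1 + p 2) ∧ p 2 / (p 1 + p 2) ≤ 1 :=
    ⟨div_nonneg (hpn 2) h12.le, (div_le_one h12).mpr (by linarith [hpn 1])⟩
  have r4 : 0 ≤ p 0 / (p 0 + p 1) ∧ p 0 / (p 0 + p 1) ≤ 1 :=
    ⟨div_nonneg (hpn 0) h01.le, (div_le_one h01).mpr (by linarith [hpn 1])⟩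
  have r5 : 0 ≤ p 1 / (p 1 + p 2) ∧ p 1 / (p 1 + p 2) ≤ 1 :=
    ⟨div_nonneg (hpn 1) h12.le, (div_le_one h12).mpr (by linarith [hpn 2])⟩
  have r6 : 0 ≤ p 0 / (p 0 + p 2) ∧ p 0 / (p 0 + p 2) ≤ 1 :=
    ⟨div_nonneg (hpn 0) h02.le, (div_le_one h02).mpr (by linarith [hpn 2])⟩
  have hMsum : (Mp p).mulVec q 0 + (Mp p).mulVec q 1 + (Mp p).mulVec q 2 = 1 := by
    rw [e0, e1, e2]
    linear_combination q 0 * c12 + q 1 * c02 + q 2 * c01 + hqs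
  have hM0 : 0 ≤ (Mp p).mulVec q 0 := by
    rw [e0]; exact add_nonneg (mul_nonneg r1.1 (hqn 1)) (mul_nonneg r2.1 (hqn 2))
  have hM1 : 0 ≤ (Mp p).mulVec q 1 := by
    rw [e1]; exact add_nonneg (mul_nonneg r3.1 (hqn 0)) (mul_nonneg r4.1 (hqn 2))
  have hM2 : 0 ≤ (Mp p).mulVec q 2 := by
    rw [e2]; exact add_nonneg (mul_nonneg r5.1 (hqn 0)) (mul_nonneg r6.1 (hqn 1))
  -- bounds: (M q) i ≤ 1 - q i
  have b0 : (Mp p).mulVec q 0 ≤ 1 - q 0 := by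
    rw [e0]
    have := mul_le_of_le_one_left (hqn 1) r1.2
    have := mul_le_of_le_one_left (hqn 2) r2.2
    linarith
  have b1 : (Mp p).mulVec q 1 ≤ 1 - q 1 := by
    rw [e1]
    have := mul_le_of_le_one_left (hqn 0) r3.2
    have := mul_le_of_le_one_left (hqn 2) r4.2
    linarith
  have b2 : (Mp p).mulVec q 2 ≤ 1 - q 2 := by
    rw [e2]
    have := mul_le_of_le_one_left (hqn 0) r5.2
    have := mul_le_of_le_one_left (hqn 1) r6.2
    linarith
  have hMq : inSimplex ((Mp p).mulVec q) := by
    refine ⟨fun i => ?_, hMsum⟩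
    fin_cases i <;> assumption
  have hs2n : ∀ i, 0 ≤ (fun i => 1 - q i - ((Mp p).mulVec q) i) i := by
    intro i; fin_cases i
    · show (0:ℝ) ≤ 1 - q 0 - (Mp p).mulVec q 0; linarith
    · show (0:ℝ) ≤ 1 - q 1 - (Mp p).mulVec q 1; linarith
    · show (0:ℝ) ≤ 1 - q 2 - (Mp p).mulVec q 2; linarith
  have hs2s : (fun i => 1 - q i - ((Mp p).mulVec q) i) 0 +
      (fun i => 1 - q i - ((Mp p).mulVec q) i) 1 +
      (fun i => 1 - q i - ((Mp p).mulVec q) i) 2 = 1 := by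
    show (1 - q 0 - (Mp p).mulVec q 0) + (1 - q 1 - (Mp p).mulVec q 1) +
      (1 - q 2 - (Mp p).mulVec q 2) = 1
    linarith
  have hp0 : p 0 < 1 := lt_of_le_of_ne (by linarith [hpn 1, hpn 2]) (hpV 0)
  have hp1 : p 1 < 1 := lt_of_le_of_ne (by linarith [hpn 0, hpn 2]) (hpV 1)
  have hp2 : p 2 < 1 := lt_of_le_of_ne (by linarith [hpn 0, hpn 1]) (hpV 2)
  have hplt : ∀ i, p i < 1 := by
    intro i; fin_cases i
    exacts [hp0, hp1, hp2]
  have hrle : ∀ i, 1 - q i - ((Mp p).mulVec q) i ≤ 1 := by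
    intro i
    have h1 := hqn i
    have h2 := hMq.1 i
    linarith
  refine ⟨hMq, ⟨hs2n, hs2s⟩, ⟨fun i => ?_, ?_⟩, fun i => ?_⟩
  · show (0:ℝ) ≤ (1 - ρ) * p i + ρ * (1 - q i - ((Mp p).mulVec q) i)
    have ha : 0 ≤ (1 - ρ) * p i := mul_nonneg (by linarith) (hpn i)
    have hb : 0 ≤ ρ * (1 - q i - ((Mp p).mulVec q) i) := mul_nonneg hρ0.le (hs2n i)
    linarith
  · show (1 - ρ) * p 0 + ρ * (1 - q 0 - ((Mp p).mulVec q) 0) +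
      ((1 - ρ) * p 1 + ρ * (1 - q 1 - ((Mp p).mulVec q) 1)) +
      ((1 - ρ) * p 2 + ρ * (1 - q 2 - ((Mp p).mulVec q) 2)) = 1
    linear_combination (1 - ρ) * hps - ρ * hqs - ρ * hMsum
  · have h1 : (1 - ρ) * p i < (1 - ρ) * 1 :=
      mul_lt_mul_of_pos_left (hplt i) (by linarith)
    have h2 : ρ * (1 - q i - ((Mp p).mulVec q) i) ≤ ρ * 1 :=
      mul_le_mul_of_nonneg_left (hrle i) hρ0.le
    have : (1 - ρ) * p i + ρ * (1 - q i - ((Mp p).mulVec q) i) < 1 := by linarith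
    exact this.ne
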